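/- If x ∈ BCN(B,F) \ RCN(B,F) and F ⊨ B ≡ B' (F entails both B → B' and B' → B), then x ∈ B'. -/
import Mathlib


/-- A definite Horn clause: a finite body of variables implying a head variable. -/
structure Clause (V : Type) where
  body : Finset V
  head : V
deriving DecidableEq

variable {V : Type} [DecidableEq V]

/-- A model satisfies a clause when the head is true if the whole body is true. -/
def satClause (M : V → Prop) (c : Clause V) : Prop :=
  (∀ v ∈ c.body, M v) → M c.head

/-- A model satisfies a set of clauses when it satisfies each of them. -/
def satSet (M : V → Prop) (S : Set (Clause V)) : Prop :=
  ∀ c ∈ S, satClause M c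

/-- `EntV S A x`: the formula `S` together with the variables `A` entails variable `x`. -/
def EntV (S : Set (Clause V)) (A : Set V) (x : V) : Prop :=
  ∀ M : V → Prop, satSet M S → (∀ v ∈ A, M v) → M x

/-- `EntVS S A B`: `S ⊨ A → B`, i.e. `S` with `A` entails every variable of `B`. -/
def EntVS (S : Set (Clause V)) (A B : Set V) : Prop :=
  ∀ x ∈ B, EntV S A x

/-- `EntF S T`: `S` entails every clause of `T`. -/
def EntF (S T : Set (Clause V)) : Prop :=
  ∀ c ∈ T, EntV S (↑c.body) c.head

/-- Logical equivalence of two sets of clauses: same models. -/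
def EquivS (S T : Set (Clause V)) : Prop :=
  ∀ M : V → Prop, satSet M S ↔ satSet M T

/-- `BCN`: all variable consequences of `B` under the formula `S`. -/
def BCN (S : Set (Clause V)) (B : Set V) : Set V :=
  {x | EntV S B x}

/-- `RCN`: real consequences of `B` under `S`. -/
def RCN (S : Set (Clause V)) (B : Set V) : Set V :=
  {x | EntV S (BCN S B \ {x}) x}

/-- `F^x`: `F` without the clauses mentioning `x` in head or body. -/
def Fx (F : Finset (Clause V)) (x : V) : Finset (Clause V) :=
  F.filter (fun c => x ∉ c.body ∧ c.head ≠ x)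

/-- A formula is single-head when no two distinct clauses share the head. -/
def SingleHead (F : Finset (Clause V)) : Prop :=
  ∀ c ∈ F, ∀ d ∈ F, c.head = d.head → c = d

/-- `UCL(B,F)`: non-tautological clauses of `F` whose body is entailed by `B` according to `F`. -/
def UCL (B : Set V) (F : Finset (Clause V)) : Set (Clause V) :=
  {c | c ∈ F ∧ c.head ∉ c.body ∧ EntVS (↑F) B (↑c.body)}

/-- `UCL(B,G,F)`: clauses of `G` whose body is entailed by `B` according to `F`. -/
def UCL3 (B : Set V) (G F : Finset (Clause V)) : Set (Clause V) :=
  {c | c ∈ G ∧ EntVS (↑F) B (↑c.body)}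

/-- `SCL(B,F)`: clauses of strictly entailed bodies. -/
def SCL (B : Set V) (F : Finset (Clause V)) : Set (Clause V) :=
  {c | c.head ∉ c.body ∧ EntV (↑F) (↑c.body) c.head ∧
       EntVS (↑F) B (↑c.body) ∧ ¬ EntVS (↑F) (↑c.body) B}

/-- `BCL(B,F)`: clauses of equivalent bodies. -/
def BCL (B : Set V) (F : Finset (Clause V)) : Set (Clause V) :=
  {c | c.head ∉ c.body ∧ EntV (↑F) (↑c.body) c.head ∧
       EntVS (↑F) B (↑c.body) ∧ EntVS (↑F) (↑c.body) B}

/-- `HCLOSE(H,S)`: body-minimal non-tautological entailed clauses with head in `H`. -/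
def HCLOSE (H : Set V) (S : Set (Clause V)) : Set (Clause V) :=
  {c | EntV S (↑c.body) c.head ∧ c.head ∈ H ∧ c.head ∉ c.body ∧
       ∀ B'' : Finset V, B'' ⊂ c.body → ¬ EntV S (↑B'') c.head}

/-- One resolution step: resolve a clause of `S` into the body of `c`. -/
def Step (S : Set (Clause V)) (c d : Clause V) : Prop :=
  ∃ e ∈ S, e.head ∈ c.body ∧ d = ⟨(c.body \ {e.head}) ∪ e.body, c.head⟩

theorem stmt4 (F : Finset (Clause V)) (B B' : Set V) (x : V)
    (hx : x ∈ BCN (↑F) B \ RCN (↑F) B)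
    (h1 : EntVS (↑F) B B') (h2 : EntVS (↑F) B' B) :
    x ∈ B' := by
  obtain ⟨hb, hr⟩ := hx
  simp only [RCN, Set.mem_setOf_eq, EntV] at hr
  push_neg at hr
  obtain ⟨M, hMF, hMA, hMx⟩ := hr
  have hM : ∀ y, EntV (↑F) B y → y ≠ x → M y := by
    intro y hy hyx
    exact hMA y ⟨hy, hyx⟩
  have hxB : x ∈ B := by
    by_contra hxB
    exact hMx (hb M hMF (fun v hv => hM v (fun N hN hNB => hNB v hv)
      (fun h => hxB (h ▸ hv))))
  by_contra hxB'
  have hMB' : ∀ v ∈ B', M v := fun v hv =>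
    hM v (h1 v hv) (fun h => hxB' (h ▸ hv))
  exact hMx (h2 x hxB M hMF hMB')
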